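/- E-matching soundness: if pattern p matches e-class a via e-class substitution θ (i.e., θ(p) ⊴ a), then for every assignment of a term tX ∈ ⟦θ(X)⟧ to each variable X of p, the resulting ground instance of p is a term in ⟦a⟧; consequently, every e-matching substitution corresponds to at least one ordinary pattern match against some term represented by a. -/
import Mathlib


/-! STATEMENT 16: E-matching soundness: if pattern p e-matches e-class a via
an e-class substitution θ (θ(p) ⊴ a), then instantiating each variable X of
p with a term in ⟦θ(X)⟧ yields a term in ⟦a⟧; consequently every e-matching
substitution corresponds to an ordinary pattern match against some term
represented by a. -/

/-- Patterns / partial terms: constructor trees whose leaves may be variables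
(for partial terms, the "variables" are e-class ids). -/
inductive Pat (S V : Type) : Type where
  | var : V → Pat S V
  | con : S → List (Pat S V) → Pat S V

/-- Ground terms over the signature `S`. -/
inductive Term (S : Type) : Type where
  | mk : S → List (Term S) → Term S

/-- An e-graph, given by its e-class map: each e-class id is mapped to a set of
e-nodes, an e-node being a constructor applied to e-class ids. -/
abbrev EGraph (S I : Type) := I → Set (S × List I)

namespace Term

variable {S : Type}

/-- Size of a term (number of AST nodes). -/
def size : Term S → ℕ
  | .mk _ args => 1 + (args.attach.map (fun a => size a.1)).sum
  decreasing_by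
  all_goals simp_wf
  all_goals (try have h := List.sizeOf_lt_of_mem a.2)
  all_goals omega

end Term

namespace Pat

variable {S V W : Type}

/-- Size of a pattern (number of constructor and variable occurrences). -/
def size : Pat S V → ℕ
  | .var _ => 1
  | .con _ args => 1 + (args.attach.map (fun a => size a.1)).sum
  decreasing_by
  all_goals simp_wf
  all_goals (try have h := List.sizeOf_lt_of_mem a.2)
  all_goals omega

/-- The list of variable occurrences of a pattern. -/
def varsList : Pat S V → List V
  | .var x => [x]
  | .con _ args => args.attach.flatMap (fun a => varsList a.1)
  decreasing_by
  all_goals simp_wf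
  all_goals (try have h := List.sizeOf_lt_of_mem a.2)
  all_goals omega

/-- Renaming the variables of a pattern (e.g. applying an e-class
substitution, yielding a partial term). -/
def rename (f : V → W) : Pat S V → Pat S W
  | .var x => .var (f x)
  | .con s args => .con s (args.attach.map (fun a => rename f a.1))
  decreasing_by
  all_goals simp_wf
  all_goals (try have h := List.sizeOf_lt_of_mem a.2)
  all_goals omega

/-- Instantiating a pattern by assigning a ground term to each variable. -/
def inst (τ : V → Term S) : Pat S V → Term S
  | .var x => τ x
  | .con s args => .mk s (args.attach.map (fun a => inst τ a.1))
  decreasing_by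
  all_goals simp_wf
  all_goals (try have h := List.sizeOf_lt_of_mem a.2)
  all_goals omega

end Pat

/-- The denotation of an e-class: `Denotes M a t` holds iff the ground term `t`
is represented by e-class `a` (via a finite derivation). -/
inductive Denotes {S I : Type} (M : EGraph S I) : I → Term S → Prop where
  | mk {a : I} {s : S} {as : List I} {ts : List (Term S)} :
      (s, as) ∈ M a → List.Forall₂ (Denotes M) as ts →
      Denotes M a (.mk s ts)

/-- Containment `π ⊴ a` of a partial term in an e-class: `a ⊴ a`, and
`s(π₁,…,πₖ) ⊴ a` iff some e-node `s(a₁,…,aₖ) ∈ M(a)` has `πᵢ ⊴ aᵢ`. -/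
inductive Contains {S I : Type} (M : EGraph S I) : Pat S I → I → Prop where
  | var (a : I) : Contains M (.var a) a
  | con {s : S} {πs : List (Pat S I)} {a : I} {as : List I} :
      (s, as) ∈ M a → List.Forall₂ (Contains M) πs as →
      Contains M (.con s πs) a

theorem ematching_main {S I V : Type} (M : EGraph S I)
    (p : Pat S V) (θ : V → I) (a : I)
    (hmatch : Contains M (p.rename θ) a) (τ : V → Term S)
    (hτ : ∀ x ∈ p.varsList, Denotes M (θ x) (τ x)) :
    Denotes M a (p.inst τ) := by
  match p with
  | .var x =>
    simp only [Pat.rename] at hmatch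
    cases hmatch
    simp only [Pat.inst]
    exact hτ x (by simp [Pat.varsList])
  | .con s args =>
    simp only [Pat.rename] at hmatch
    cases hmatch with
    | con hmem hf =>
      simp only [Pat.inst]
      refine Denotes.mk hmem ?_
      rw [List.forall₂_map_left_iff] at hf
      rw [List.forall₂_map_right_iff]
      refine hf.flip.imp ?_
      intro b x hc
      exact ematching_main M x.1 θ b hc τ (fun z hz => hτ z (by
        simp only [Pat.varsList, List.mem_flatMap]
        exact ⟨x, List.mem_attach _ _, hz⟩))
termination_by sizeOf p
decreasing_by
  have := List.sizeOf_lt_of_mem x.2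
  simp
  omega

/-- E-matching soundness (for e-graphs with non-empty denotations, e.g. acyclic
ones): if `θ(p) ⊴ a`, then for every assignment `τ` of a term `τ X ∈ ⟦θ X⟧` to
each variable `X` of `p`, the ground instance `p[τ]` is in `⟦a⟧`; consequently,
the e-matching substitution `θ` corresponds to at least one ordinary pattern
match against some term represented by `a`. -/
theorem ematching_sound {S I V : Type} (M : EGraph S I)
    (hne : ∀ c : I, ∃ t : Term S, Denotes M c t)
    (p : Pat S V) (θ : V → I) (a : I)
    (hmatch : Contains M (p.rename θ) a) :
    (∀ τ : V → Term S,
      (∀ x ∈ p.varsList, Denotes M (θ x) (τ x)) →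
      Denotes M a (p.inst τ)) ∧
    (∃ (t : Term S) (τ : V → Term S),
      Denotes M a t ∧ (∀ x ∈ p.varsList, Denotes M (θ x) (τ x)) ∧
      t = p.inst τ) := by
  constructor
  · exact fun τ hτ => ematching_main M p θ a hmatch τ hτ
  · refine ⟨p.inst (fun x => Classical.choose (hne (θ x))),
      fun x => Classical.choose (hne (θ x)), ?_, ?_, rfl⟩
    · exact ematching_main M p θ a hmatch _ (fun x _ => Classical.choose_spec (hne (θ x)))
    · exact fun x _ => Classical.choose_spec (hne (θ x))
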